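/- arXiv:1206.1440 — 3 statements merged into one kernel-verified Lean document; each statement's English description precedes it below -/
import Mathlib

section
/- One-dimensional steady exciton problem with interface: for the equation −D e'' = Q − e/τ on (−L,0) ∪ (0,L) with e(−L) = e(L) = 0, continuity of e at 0, and flux jump [−De']₀⁺ − [−De']₀⁻ = −κ e(0) with κ ≥ 0, D, τ, Q > 0 constants, there exists a unique solution, it is even, nonnegative, and satisfies 0 ≤ e(x) ≤ Qτ for all x. -/
open Real Filter

/-- `e` is a solution of the steady 1D macroscale exciton problem
`-D e'' = Q - e/τ` on `(-L,0) ∪ (0,L)`, with perfect quenching `e(±L)=0`,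
continuity across the interface `x = 0`, and flux-jump condition
`[-D e']₀⁺ - [-D e']₀⁻ = -κ e(0)`. -/
def IsSteadyExcitonSol (L D τ Q κ : ℝ) (e : ℝ → ℝ) : Prop :=
  ContinuousOn e (Set.Icc (-L) L) ∧
  e (-L) = 0 ∧ e L = 0 ∧
  (∀ x ∈ Set.Ioo (-L) 0 ∪ Set.Ioo 0 L,
      DifferentiableAt ℝ e x ∧ DifferentiableAt ℝ (deriv e) x ∧
      -D * deriv (deriv e) x = Q - e x / τ) ∧
  (∃ dplus dminus : ℝ,
      Tendsto (deriv e) (nhdsWithin 0 (Set.Ioi 0)) (nhds dplus) ∧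
      Tendsto (deriv e) (nhdsWithin 0 (Set.Iio 0)) (nhds dminus) ∧
      (-D * dplus) - (-D * dminus) = -κ * e 0)

open Set Topology

/-! With `μ = (D τ)^(-1/2)` and `q = Q τ`, the function `u = e - q` solves `u'' = μ² u` on each
side of the interface. Its Wronskians against `cosh (μ x)` and `sinh (μ x)` are constant, so on
each side `u = A cosh (μ x) + B sinh (μ x)`. Continuity at `0`, the conditions `e (±L) = 0` and the
flux jump leave exactly one choice of the four coefficients, namely those of the even profile
`q + A cosh (μ x) + B sinh (μ |x|)`, and this profile is a solution. On `[0, L]` it satisfies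
`u t * sinh (μ L) = u 0 * sinh (μ (L - t)) + u L * sinh (μ t)`, where the weights are nonnegative
with sum at most `sinh (μ L)` and `u 0, u L ∈ [-q, 0]`; hence `0 ≤ e ≤ q`. -/

noncomputable def coshSinh (μ A B x : ℝ) : ℝ := A * cosh (μ * x) + B * sinh (μ * x)

section coshSinh

variable {μ A B : ℝ}

@[simp]
lemma coshSinh_zero : coshSinh μ A B 0 = A := by
  simp [coshSinh]

lemma coshSinh_neg (x : ℝ) : coshSinh μ A B (-x) = coshSinh μ A (-B) x := by
  simp [coshSinh]

lemma coshSinh_mul_left (c x : ℝ) : coshSinh μ (c * A) (c * B) x = c * coshSinh μ A B x := by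
  simp only [coshSinh]; ring

lemma continuous_coshSinh : Continuous (coshSinh μ A B) := by
  unfold coshSinh; fun_prop

lemma hasDerivAt_coshSinh (x : ℝ) :
    HasDerivAt (coshSinh μ A B) (coshSinh μ (μ * B) (μ * A) x) x := by
  have hlin : HasDerivAt (fun t => μ * t) μ x := by simpa using (hasDerivAt_id x).const_mul μ
  refine ((hlin.cosh.const_mul A).add (hlin.sinh.const_mul B)).congr_deriv ?_
  simp only [coshSinh]; ring

lemma hasDerivAt_coshSinh_ode (x : ℝ) :
    HasDerivAt (coshSinh μ A B) (coshSinh μ (μ * B) (μ * A) x) x ∧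
      HasDerivAt (coshSinh μ (μ * B) (μ * A)) (μ ^ 2 * coshSinh μ A B x) x := by
  refine ⟨hasDerivAt_coshSinh x, ?_⟩
  convert hasDerivAt_coshSinh (μ := μ) (A := μ * B) (B := μ * A) x using 1
  rw [← mul_assoc, ← mul_assoc, ← sq, coshSinh_mul_left]

lemma coshSinh_mul_sinh (l t : ℝ) :
    coshSinh μ A B t * sinh (μ * l) =
      coshSinh μ A B 0 * sinh (μ * (l - t)) + coshSinh μ A B l * sinh (μ * t) := by
  simp only [coshSinh, mul_sub, sinh_sub, mul_zero, cosh_zero, sinh_zero]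
  ring

lemma sinh_add_sinh_le {a b : ℝ} (ha : 0 ≤ a) (hb : 0 ≤ b) : sinh a + sinh b ≤ sinh (a + b) := by
  rw [sinh_add]
  nlinarith [one_le_cosh a, one_le_cosh b, sinh_nonneg_iff.2 ha, sinh_nonneg_iff.2 hb]

lemma coshSinh_mem_Icc (hμ : 0 < μ) {l m M t : ℝ} (ht : t ∈ Icc 0 l) (hm : m ≤ 0) (hM : 0 ≤ M)
    (h0 : coshSinh μ A B 0 ∈ Icc m M) (hl : coshSinh μ A B l ∈ Icc m M) :
    coshSinh μ A B t ∈ Icc m M := by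
  rcases ht.1.eq_or_lt with rfl | ht₀
  · exact h0
  have hlt : 0 ≤ μ * (l - t) := mul_nonneg hμ.le (sub_nonneg.2 ht.2)
  have ht' : 0 ≤ μ * t := mul_nonneg hμ.le ht.1
  have hw₁ := sinh_nonneg_iff.2 hlt
  have hw₂ := sinh_nonneg_iff.2 ht'
  have hS : 0 < sinh (μ * l) := sinh_pos_iff.2 (mul_pos hμ (ht₀.trans_le ht.2))
  have hsum : sinh (μ * (l - t)) + sinh (μ * t) ≤ sinh (μ * l) := by
    simpa [← mul_add] using sinh_add_sinh_le hlt ht'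
  have htwo := coshSinh_mul_sinh (μ := μ) (A := A) (B := B) l t
  constructor
  · nlinarith [mul_le_mul_of_nonneg_right h0.1 hw₁, mul_le_mul_of_nonneg_right hl.1 hw₂]
  · nlinarith [mul_le_mul_of_nonneg_right h0.2 hw₁, mul_le_mul_of_nonneg_right hl.2 hw₂]

end coshSinh

lemma IsOpen.exists_wronskian_eq {s : Set ℝ} (hs : IsOpen s) (hs' : IsPreconnected s)
    {k y y' z z' : ℝ → ℝ}
    (hy : ∀ x ∈ s, HasDerivAt y (y' x) x ∧ HasDerivAt y' (k x * y x) x)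
    (hz : ∀ x ∈ s, HasDerivAt z (z' x) x ∧ HasDerivAt z' (k x * z x) x) :
    ∃ W, ∀ x ∈ s, y' x * z x - y x * z' x = W := by
  have hW : ∀ x ∈ s, HasDerivAt (fun t => y' t * z t - y t * z' t) 0 x := by
    intro x hx
    obtain ⟨hy, hy'⟩ := hy x hx
    obtain ⟨hz, hz'⟩ := hz x hx
    exact ((hy'.mul hz).sub (hy.mul hz')).congr_deriv (by ring)
  exact hs.exists_is_const_of_deriv_eq_zero hs'
    (fun x hx => (hW x hx).differentiableAt.differentiableWithinAt) (fun x hx => (hW x hx).deriv)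

lemma IsOpen.exists_eqOn_coshSinh {s : Set ℝ} (hs : IsOpen s) (hs' : IsPreconnected s) {μ : ℝ}
    (hμ : μ ≠ 0) {u u' : ℝ → ℝ}
    (hu : ∀ x ∈ s, HasDerivAt u (u' x) x ∧ HasDerivAt u' (μ ^ 2 * u x) x) :
    ∃ A B, EqOn u (coshSinh μ A B) s ∧ EqOn u' (coshSinh μ (μ * B) (μ * A)) s := by
  obtain ⟨W₁, hW₁⟩ := hs.exists_wronskian_eq hs' hu fun x _ =>
    hasDerivAt_coshSinh_ode (A := 1) (B := 0) x
  obtain ⟨W₂, hW₂⟩ := hs.exists_wronskian_eq hs' hu fun x _ =>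
    hasDerivAt_coshSinh_ode (A := 0) (B := 1) x
  refine ⟨-W₂ / μ, W₁ / μ, fun x hx => ?_, fun x hx => ?_⟩
  all_goals
    have h₁ := hW₁ x hx
    have h₂ := hW₂ x hx
    have hpyth := cosh_sq_sub_sinh_sq (μ * x)
    simp only [coshSinh] at h₁ h₂ ⊢
    field_simp
  · linear_combination sinh (μ * x) * h₁ - cosh (μ * x) * h₂ - μ * u x * hpyth
  · linear_combination cosh (μ * x) * h₁ - sinh (μ * x) * h₂ - u' x * hpyth

lemma exists_eqOn_Icc_coshSinh {a b μ : ℝ} (hab : a < b) (hμ : μ ≠ 0) {u u' : ℝ → ℝ}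
    (hcont : ContinuousOn u (Icc a b))
    (hu : ∀ x ∈ Ioo a b, HasDerivAt u (u' x) x ∧ HasDerivAt u' (μ ^ 2 * u x) x) :
    ∃ A B, EqOn u (coshSinh μ A B) (Icc a b) ∧ EqOn u' (coshSinh μ (μ * B) (μ * A)) (Ioo a b) := by
  obtain ⟨A, B, hA, hB⟩ := isOpen_Ioo.exists_eqOn_coshSinh isPreconnected_Ioo hμ hu
  exact ⟨A, B, hA.of_subset_closure hcont continuous_coshSinh.continuousOn Ioo_subset_Icc_self
    (closure_Ioo hab.ne).superset, hB⟩

lemma IsOpen.hasDerivAt_of_eqOn_coshSinh {s : Set ℝ} (hs : IsOpen s) {f : ℝ → ℝ} {c μ A B : ℝ}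
    (hf : EqOn f (fun x => c + coshSinh μ A B x) s) {x : ℝ} (hx : x ∈ s) :
    HasDerivAt f (coshSinh μ (μ * B) (μ * A) x) x ∧
      HasDerivAt (deriv f) (μ ^ 2 * (f x - c)) x := by
  have hderiv : EqOn (deriv f) (coshSinh μ (μ * B) (μ * A)) s := fun y hy =>
    ((hasDerivAt_coshSinh y).const_add c).deriv ▸
      (eventuallyEq_of_mem (hs.mem_nhds hy) hf).deriv_eq
  obtain ⟨h₁, h₂⟩ := hasDerivAt_coshSinh_ode (μ := μ) (A := A) (B := B) x
  refine ⟨(h₁.const_add c).congr_of_eventuallyEq (eventuallyEq_of_mem (hs.mem_nhds hx) hf), ?_⟩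
  rw [hf hx, add_sub_cancel_left]
  exact h₂.congr_of_eventuallyEq (eventuallyEq_of_mem (hs.mem_nhds hx) hderiv)

lemma tendsto_coshSinh_of_eqOn {f : ℝ → ℝ} {s t : Set ℝ} {a μ A B : ℝ} (hs : s ∈ 𝓝[t] a)
    (hf : EqOn f (coshSinh μ A B) s) : Tendsto f (𝓝[t] a) (𝓝 (coshSinh μ A B a)) :=
  (continuous_coshSinh.tendsto a |>.mono_left nhdsWithin_le_nhds).congr'
    (eventuallyEq_of_mem hs hf.symm)

/-- The value of `e 0 - q`: the boundary condition at `L` and the flux jump determine it,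
see `eq_interfaceDrop`. -/
noncomputable def interfaceDrop (L D μ q κ : ℝ) : ℝ :=
  -q * (2 * D * μ + κ * sinh (μ * L)) / (2 * D * μ * cosh (μ * L) + κ * sinh (μ * L))

noncomputable def steadyProfile (L D μ q κ : ℝ) (x : ℝ) : ℝ :=
  q + coshSinh μ (interfaceDrop L D μ q κ)
    (κ * (q + interfaceDrop L D μ q κ) / (2 * D * μ)) |x|

section interface

variable {L D μ q κ : ℝ}

lemma interface_denom_pos (hD : 0 < D) (hμ : 0 < μ) (hL : 0 ≤ L) (hκ : 0 ≤ κ) :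
    0 < 2 * D * μ * cosh (μ * L) + κ * sinh (μ * L) := by
  have := sinh_nonneg_iff.2 (mul_nonneg hμ.le hL)
  have := cosh_pos (μ * L)
  positivity

lemma eq_interfaceDrop (hD : 0 < D) (hμ : 0 < μ) (hL : 0 ≤ L) (hκ : 0 ≤ κ) {A B : ℝ}
    (hboundary : A * cosh (μ * L) + B * sinh (μ * L) = -q)
    (hjump : 2 * D * μ * B = κ * (q + A)) :
    A = interfaceDrop L D μ q κ := by
  rw [interfaceDrop, eq_div_iff (interface_denom_pos hD hμ hL hκ).ne']
  linear_combination 2 * D * μ * hboundary - sinh (μ * L) * hjump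

lemma coshSinh_interfaceDrop (hD : 0 < D) (hμ : 0 < μ) (hL : 0 ≤ L) (hκ : 0 ≤ κ) :
    coshSinh μ (interfaceDrop L D μ q κ) (κ * (q + interfaceDrop L D μ q κ) / (2 * D * μ)) L
      = -q := by
  have hden := (interface_denom_pos hD hμ hL hκ).ne'
  simp only [coshSinh, interfaceDrop]
  field_simp
  ring

lemma interfaceDrop_mem_Icc (hD : 0 < D) (hμ : 0 < μ) (hL : 0 ≤ L) (hκ : 0 ≤ κ) (hq : 0 ≤ q) :
    interfaceDrop L D μ q κ ∈ Icc (-q) 0 := by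
  have hden := interface_denom_pos hD hμ hL hκ
  have hS := sinh_nonneg_iff.2 (mul_nonneg hμ.le hL)
  have hC := one_le_cosh (μ * L)
  rw [interfaceDrop, mem_Icc, le_div_iff₀ hden, div_le_iff₀ hden]
  constructor
  · nlinarith [mul_nonneg (mul_nonneg hq (by positivity : (0:ℝ) ≤ 2 * D * μ)) (sub_nonneg.2 hC)]
  · nlinarith [mul_nonneg hκ hS, mul_pos hD hμ]

lemma interface_coeffs_eq (hD : 0 < D) (hμ : 0 < μ) (hL : 0 < L) (hκ : 0 ≤ κ) {A B B' : ℝ}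
    (hright : A * cosh (μ * L) + B * sinh (μ * L) = -q)
    (hleft : A * cosh (μ * L) - B' * sinh (μ * L) = -q)
    (hflux : -D * (μ * B) - -D * (μ * B') = -κ * (q + A)) :
    A = interfaceDrop L D μ q κ ∧
      B = κ * (q + interfaceDrop L D μ q κ) / (2 * D * μ) ∧ B' = -B := by
  have hB' : B' = -B := by
    have hsum : (B' + B) * sinh (μ * L) = 0 := by linear_combination hright - hleft
    linear_combination (mul_eq_zero.1 hsum).resolve_right (sinh_pos_iff.2 (mul_pos hμ hL)).ne'
  have hjump : 2 * D * μ * B = κ * (q + A) := by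
    rw [hB'] at hflux
    linear_combination -hflux
  obtain rfl := eq_interfaceDrop hD hμ hL.le hκ hright hjump
  refine ⟨rfl, ?_, hB'⟩
  rw [eq_div_iff (by positivity)]
  linear_combination hjump

end interface

section exciton

variable {L D τ Q κ μ : ℝ}

lemma exciton_ode_iff (hτ : τ ≠ 0) (hDμτ : D * μ ^ 2 * τ = 1) {y y'' : ℝ} :
    -D * y'' = Q - y / τ ↔ y'' = μ ^ 2 * (y - Q * τ) := by
  constructor <;> intro h
  · field_simp at h
    linear_combination -μ ^ 2 * h - y'' * hDμτ
  · field_simp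
    linear_combination -D * τ * h - (y - Q * τ) * hDμτ

lemma IsSteadyExcitonSol.hasDerivAt {e : ℝ → ℝ} (he : IsSteadyExcitonSol L D τ Q κ e)
    (hτ : 0 < τ) (hDμτ : D * μ ^ 2 * τ = 1) {x : ℝ} (hx : x ∈ Ioo (-L) 0 ∪ Ioo 0 L) :
    HasDerivAt (fun y => e y - Q * τ) (deriv e x) x ∧
      HasDerivAt (deriv e) (μ ^ 2 * (e x - Q * τ)) x := by
  obtain ⟨he', he'', hode⟩ := he.2.2.2.1 x hx
  exact ⟨he'.hasDerivAt.sub_const _,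
    he''.hasDerivAt.congr_deriv ((exciton_ode_iff hτ.ne' hDμτ).1 hode)⟩

lemma IsSteadyExcitonSol.eqOn_steadyProfile {e : ℝ → ℝ} (he : IsSteadyExcitonSol L D τ Q κ e)
    (hL : 0 < L) (hD : 0 < D) (hτ : 0 < τ) (hκ : 0 ≤ κ) (hμ : 0 < μ)
    (hDμτ : D * μ ^ 2 * τ = 1) :
    EqOn e (steadyProfile L D μ (Q * τ) κ) (Icc (-L) L) := by
  have hode (x : ℝ) (hx : x ∈ Ioo (-L) 0 ∪ Ioo 0 L) := he.hasDerivAt hτ hDμτ hx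
  obtain ⟨hcont, hleft, hright, -, dp, dm, hdp, hdm, hflux⟩ := he
  obtain ⟨A, B, hu, hu'⟩ := exists_eqOn_Icc_coshSinh hL hμ.ne'
    ((hcont.mono (Icc_subset_Icc (by linarith) le_rfl)).sub continuousOn_const)
    fun x hx => hode x (Or.inr hx)
  obtain ⟨A', B', hv, hv'⟩ := exists_eqOn_Icc_coshSinh (neg_lt_zero.2 hL) hμ.ne'
    ((hcont.mono (Icc_subset_Icc le_rfl (by linarith))).sub continuousOn_const)
    fun x hx => hode x (Or.inl hx)
  have hdp : dp = μ * B := tendsto_nhds_unique hdp (by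
    simpa using tendsto_coshSinh_of_eqOn (Ioo_mem_nhdsGT hL) hu')
  have hdm : dm = μ * B' := tendsto_nhds_unique hdm (by
    simpa using tendsto_coshSinh_of_eqOn (Ioo_mem_nhdsLT (neg_lt_zero.2 hL)) hv')
  have hu0 : e 0 - Q * τ = A := by simpa using hu ⟨le_rfl, hL.le⟩
  have hv0 : e 0 - Q * τ = A' := by simpa using hv ⟨by linarith, le_rfl⟩
  obtain rfl : A = A' := hu0.symm.trans hv0
  have huL : A * cosh (μ * L) + B * sinh (μ * L) = -(Q * τ) := by
    simpa [coshSinh, hright] using (hu ⟨hL.le, le_rfl⟩).symm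
  have hvL : A * cosh (μ * L) - B' * sinh (μ * L) = -(Q * τ) := by
    simpa [coshSinh, hleft, sub_eq_add_neg] using (hv ⟨le_rfl, by linarith⟩).symm
  rw [hdp, hdm, ← add_sub_cancel (Q * τ) (e 0), hu0] at hflux
  obtain ⟨rfl, rfl, rfl⟩ := interface_coeffs_eq hD hμ hL hκ huL hvL hflux
  intro x hx
  rcases le_total 0 x with hx0 | hx0
  · have h : e x - Q * τ = _ := hu ⟨hx0, hx.2⟩
    rw [steadyProfile, abs_of_nonneg hx0, ← h]
    ring
  · have h : e x - Q * τ = _ := hv ⟨hx.1, hx0⟩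
    rw [steadyProfile, abs_of_nonpos hx0, coshSinh_neg, ← h]
    ring

lemma steadyProfile_isSteadyExcitonSol (hL : 0 ≤ L) (hD : 0 < D) (hτ : 0 < τ) (hκ : 0 ≤ κ)
    (hμ : 0 < μ) (hDμτ : D * μ ^ 2 * τ = 1) :
    IsSteadyExcitonSol L D τ Q κ (steadyProfile L D μ (Q * τ) κ) := by
  set c₁ := interfaceDrop L D μ (Q * τ) κ
  set c₂ := κ * (Q * τ + c₁) / (2 * D * μ) with hc₂
  have hright : EqOn (steadyProfile L D μ (Q * τ) κ) (fun x => Q * τ + coshSinh μ c₁ c₂ x)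
      (Ioi 0) := fun x hx => by
    rw [steadyProfile, abs_of_pos hx]
  have hleft : EqOn (steadyProfile L D μ (Q * τ) κ) (fun x => Q * τ + coshSinh μ c₁ (-c₂) x)
      (Iio 0) := fun x hx => by
    rw [steadyProfile, abs_of_neg hx, coshSinh_neg]
  have hderiv (x : ℝ) (hx : x ∈ Ioo (-L) 0 ∪ Ioo 0 L) :
      DifferentiableAt ℝ (steadyProfile L D μ (Q * τ) κ) x ∧
        HasDerivAt (deriv (steadyProfile L D μ (Q * τ) κ))
          (μ ^ 2 * (steadyProfile L D μ (Q * τ) κ x - Q * τ)) x :=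
    hx.elim
      (fun hx => (isOpen_Iio.hasDerivAt_of_eqOn_coshSinh hleft hx.2).imp_left (·.differentiableAt))
      (fun hx => (isOpen_Ioi.hasDerivAt_of_eqOn_coshSinh hright hx.1).imp_left (·.differentiableAt))
  refine ⟨(continuous_const.add (continuous_coshSinh.comp continuous_abs)).continuousOn,
    ?_, ?_, fun x hx => ?_, μ * c₂, μ * -c₂, ?_, ?_, ?_⟩
  · rw [steadyProfile, abs_neg, abs_of_nonneg hL, coshSinh_interfaceDrop hD hμ hL hκ,
      add_neg_cancel]
  · rw [steadyProfile, abs_of_nonneg hL, coshSinh_interfaceDrop hD hμ hL hκ, add_neg_cancel]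
  · obtain ⟨hdiff, hdiff'⟩ := hderiv x hx
    exact ⟨hdiff, hdiff'.differentiableAt, (exciton_ode_iff hτ.ne' hDμτ).2 hdiff'.deriv⟩
  · simpa using tendsto_coshSinh_of_eqOn (a := 0) self_mem_nhdsWithin
      fun x hx => (isOpen_Ioi.hasDerivAt_of_eqOn_coshSinh hright hx).1.deriv
  · simpa using tendsto_coshSinh_of_eqOn (a := 0) self_mem_nhdsWithin
      fun x hx => (isOpen_Iio.hasDerivAt_of_eqOn_coshSinh hleft hx).1.deriv
  · rw [steadyProfile, abs_zero, coshSinh_zero]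
    rw [hc₂]
    field_simp
    ring

end exciton

section profile

variable {L D μ q κ : ℝ}

lemma steadyProfile_neg (x : ℝ) : steadyProfile L D μ q κ (-x) = steadyProfile L D μ q κ x := by
  rw [steadyProfile, steadyProfile, abs_neg]

lemma steadyProfile_mem_Icc (hD : 0 < D) (hμ : 0 < μ) (hL : 0 ≤ L) (hκ : 0 ≤ κ) (hq : 0 ≤ q)
    {x : ℝ} (hx : x ∈ Icc (-L) L) : steadyProfile L D μ q κ x ∈ Icc 0 q := by
  have h := coshSinh_mem_Icc hμ ⟨abs_nonneg x, abs_le.2 hx⟩ (neg_nonpos.2 hq) le_rfl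
    (by simpa using interfaceDrop_mem_Icc hD hμ hL hκ hq)
    (by rw [coshSinh_interfaceDrop hD hμ hL hκ]; exact ⟨le_rfl, neg_nonpos.2 hq⟩)
  rw [steadyProfile]
  constructor <;> linarith [h.1, h.2]

end profile

theorem steady_exciton_interface_problem
    (L D τ Q κ : ℝ) (hL : 0 < L) (hD : 0 < D) (hτ : 0 < τ) (hQ : 0 < Q)
    (hκ : 0 ≤ κ) :
    -- existence
    (∃ e : ℝ → ℝ, IsSteadyExcitonSol L D τ Q κ e) ∧
    -- uniqueness (on the physical domain)
    (∀ e₁ e₂ : ℝ → ℝ, IsSteadyExcitonSol L D τ Q κ e₁ →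
      IsSteadyExcitonSol L D τ Q κ e₂ →
      Set.EqOn e₁ e₂ (Set.Icc (-L) L)) ∧
    -- evenness and the bounds 0 ≤ e ≤ Qτ
    (∀ e : ℝ → ℝ, IsSteadyExcitonSol L D τ Q κ e →
      (∀ x ∈ Set.Icc (-L) L, e (-x) = e x) ∧
      (∀ x ∈ Set.Icc (-L) L, 0 ≤ e x ∧ e x ≤ Q * τ)) := by
  obtain ⟨μ, hμ, hDμτ⟩ : ∃ μ : ℝ, 0 < μ ∧ D * μ ^ 2 * τ = 1 :=
    ⟨(√(D * τ))⁻¹, by positivity, by rw [inv_pow, sq_sqrt (by positivity)]; field_simp⟩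
  have hprofile {e : ℝ → ℝ} (he : IsSteadyExcitonSol L D τ Q κ e) :=
    he.eqOn_steadyProfile hL hD hτ hκ hμ hDμτ
  refine ⟨⟨_, steadyProfile_isSteadyExcitonSol hL.le hD hτ hκ hμ hDμτ⟩,
    fun e₁ e₂ h₁ h₂ => (hprofile h₁).trans (hprofile h₂).symm,
    fun e he => ⟨fun x hx => ?_, fun x hx => ?_⟩⟩
  · have hx' : -x ∈ Icc (-L) L := ⟨by linarith [hx.2], by linarith [hx.1]⟩
    rw [hprofile he hx, hprofile he hx', steadyProfile_neg]
  · rw [hprofile he hx]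
    exact steadyProfile_mem_Icc hD hμ hL.le hκ (by positivity) hx
end

section
/- Maximum principle bound for the bulk exciton equation: if e solves ∂e/∂t − D Δe = Q − e/τ on Ω × (0,T) with e = 0 on the contact boundary, zero initial data, and Q constant with 0 ≤ Q, and if the interface exchange term only removes excitons (flux jump condition [−Dν·∇e] = −κ e on Γ with κ ≥ 0), then 0 ≤ e(x,t) ≤ Qτ(1 − e^{−t/τ}) ≤ Qτ for all (x,t). State and prove the one-dimensional version. -/
/-!
Both bounds are instances of a weak maximum principle for `w = σ e - c M` with `σ ≤ c`, `0 ≤ c`,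
where `M t = Q τ (1 - exp (-t/τ))` is the spatially uniform solution. Such a `w` satisfies
`w_t ≤ D w_xx - w/τ` in the bulk, `w ≤ 0` on the parabolic boundary, and, since `κ ≥ 0`, the
jump condition forces `w_x(0⁻) ≤ w_x(0⁺)` wherever `w(0,t) > 0`. Let `w + ε|x|` attain its
maximum over the closed cylinder at `(x₀, t₀)` with `t₀ > 0`, `|x₀| < L`. If `x₀ ≠ 0`, then
`w_t ≥ 0 ≥ D w_xx` there, and the absorption term `-w/τ` forces `w ≤ 0`. If `x₀ = 0`, the kink
of `ε|x|` forces `w_x(0⁺) ≤ -ε < ε ≤ w_x(0⁻)`, so again `w ≤ 0`. Hence `w + ε|x| ≤ εL`, and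
`ε → 0` gives `w ≤ 0`.
-/

open Real Filter Set Topology

section Calculus

variable {f : ℝ → ℝ} {f' a : ℝ}

theorem IsLocalMaxOn.hasDerivWithinAt_Ici_nonpos (h : IsLocalMaxOn f (Ici a) a)
    (hf : HasDerivWithinAt f f' (Ici a) a) : f' ≤ 0 := by
  have hcone : (1 : ℝ) ∈ posTangentConeAt (Ici a) a :=
    mem_posTangentConeAt_of_segment_subset (by simp [Icc_subset_Ici_self])
  simpa using h.hasFDerivWithinAt_nonpos hf.hasFDerivWithinAt hcone

theorem IsLocalMaxOn.hasDerivWithinAt_Iic_nonneg (h : IsLocalMaxOn f (Iic a) a)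
    (hf : HasDerivWithinAt f f' (Iic a) a) : 0 ≤ f' := by
  have hcone : (-1 : ℝ) ∈ posTangentConeAt (Iic a) a :=
    mem_posTangentConeAt_of_segment_subset (by simp [segment_eq_Icc', Icc_subset_Iic_self])
  simpa using h.hasFDerivWithinAt_nonpos hf.hasFDerivWithinAt hcone

theorem IsLocalMaxOn.hasDerivWithinAt_Ici_add_abs_nonpos {ε : ℝ}
    (h : IsLocalMaxOn (fun x => f x + ε * |x - a|) (Ici a) a)
    (hf : HasDerivWithinAt f f' (Ici a) a) : f' + ε ≤ 0 := by
  refine h.hasDerivWithinAt_Ici_nonpos ?_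
  have hlin : HasDerivWithinAt (fun x => f x + ε * (x - a)) (f' + ε) (Ici a) a :=
    (hf.add (((hasDerivWithinAt_id a _).sub_const a).const_mul ε)).congr_deriv (by ring)
  exact hlin.congr (fun x hx => by rw [abs_of_nonneg (sub_nonneg.2 hx)]) (by simp)

theorem IsLocalMaxOn.hasDerivWithinAt_Iic_add_abs_nonneg {ε : ℝ}
    (h : IsLocalMaxOn (fun x => f x + ε * |x - a|) (Iic a) a)
    (hf : HasDerivWithinAt f f' (Iic a) a) : 0 ≤ f' - ε := by
  refine h.hasDerivWithinAt_Iic_nonneg ?_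
  have hlin : HasDerivWithinAt (fun x => f x - ε * (x - a)) (f' - ε) (Iic a) a :=
    (hf.sub (((hasDerivWithinAt_id a _).sub_const a).const_mul ε)).congr_deriv (by ring)
  refine hlin.congr (fun x hx => ?_) (by simp)
  rw [abs_of_nonpos (sub_nonpos.2 hx)]
  ring

theorem IsLocalMax.deriv_deriv_nonpos (h : IsLocalMax f a) (hc : ContinuousAt f a) :
    deriv (deriv f) a ≤ 0 := by
  by_contra! hpos
  have hmin : IsLocalMin f a := isLocalMin_of_deriv_deriv_pos hpos h.deriv_eq_zero hc
  have hconst : f =ᶠ[𝓝 a] fun _ => f a := by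
    filter_upwards [h, hmin] with x hmax hmin using le_antisymm hmax hmin
  simp [hconst.deriv.deriv_eq] at hpos

theorem IsLocalMax.deriv_deriv_nonpos_of_add_mul {c : ℝ}
    (h : IsLocalMax (fun x => f x + c * x) a) (hf : ∀ᶠ x in 𝓝 a, DifferentiableAt ℝ f x) :
    deriv (deriv f) a ≤ 0 := by
  have hderiv : deriv (fun x => f x + c * x) =ᶠ[𝓝 a] fun x => deriv f x + c := by
    filter_upwards [hf] with x hx
    exact ((hx.hasDerivAt.add ((hasDerivAt_id x).const_mul c)).congr_deriv (by ring)).deriv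
  have := h.deriv_deriv_nonpos (hf.self_of_nhds.continuousAt.add (by fun_prop))
  rwa [hderiv.deriv_eq, deriv_add_const] at this

theorem exists_abs_eventuallyEq_const_mul (ha : a ≠ 0) :
    ∃ c : ℝ, (fun x => |x|) =ᶠ[𝓝 a] fun x => c * x := by
  rcases ha.lt_or_gt with ha | ha
  · exact ⟨-1, by filter_upwards [eventually_lt_nhds ha] with x hx using by simp [abs_of_neg hx]⟩
  · exact ⟨1, by filter_upwards [eventually_gt_nhds ha] with x hx using by simp [abs_of_pos hx]⟩

theorem deriv_const_mul_sub_const (σ k : ℝ) (f : ℝ → ℝ) :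
    deriv (fun y => σ * f y - k) = fun y => σ * deriv f y := by
  ext y
  rw [deriv_sub_const, deriv_const_mul_field]

end Calculus

/-- Subsolution of `w_t = D w_xx - w/τ` on `(-L, 0) ∪ (0, L)`; of the interface condition only the
sign of the slope jump at points where `w(0,t) > 0` is kept. -/
structure IsInterfaceSubsolution (D τ L T : ℝ) (w : ℝ → ℝ → ℝ) : Prop where
  continuousOn : ContinuousOn (fun p : ℝ × ℝ => w p.1 p.2) (Icc (-L) L ×ˢ Icc 0 T)
  differentiableAt : ∀ x ∈ Ioo (-L) 0 ∪ Ioo 0 L, ∀ t ∈ Ioc 0 T, DifferentiableAt ℝ (w · t) x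
  hasDerivAt_le : ∀ x ∈ Ioo (-L) 0 ∪ Ioo 0 L, ∀ t ∈ Ioc 0 T,
    ∃ wt, HasDerivAt (w x) wt t ∧ wt ≤ D * deriv (deriv (w · t)) x - w x t / τ
  interface : ∀ t ∈ Ioc 0 T, 0 < w 0 t → ∃ dplus dminus : ℝ,
    Tendsto (deriv (w · t)) (𝓝[>] 0) (𝓝 dplus) ∧
    Tendsto (deriv (w · t)) (𝓝[<] 0) (𝓝 dminus) ∧ dminus ≤ dplus

namespace IsInterfaceSubsolution

variable {D τ L T : ℝ} {w : ℝ → ℝ → ℝ}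

theorem continuousOn_slice (hw : IsInterfaceSubsolution D τ L T w) {t : ℝ} (ht : t ∈ Icc 0 T) :
    ContinuousOn (w · t) (Icc (-L) L) :=
  hw.continuousOn.comp (continuous_id.prodMk continuous_const).continuousOn fun _ hx => ⟨hx, ht⟩

theorem nonpos_of_isMaxOn_bulk (hw : IsInterfaceSubsolution D τ L T w) (hD : 0 ≤ D)
    (hτ : 0 < τ) {ε x₀ t₀ : ℝ} (hx₀ : x₀ ∈ Ioo (-L) 0 ∪ Ioo 0 L) (ht₀ : t₀ ∈ Ioc 0 T)
    (hspace : IsMaxOn (fun x => w x t₀ + ε * |x|) (Icc (-L) L) x₀)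
    (htime : IsMaxOn (w x₀) (Icc 0 T) t₀) : w x₀ t₀ ≤ 0 := by
  obtain ⟨wt, hwt, hle⟩ := hw.hasDerivAt_le x₀ hx₀ t₀ ht₀
  have hbulk : Ioo (-L) 0 ∪ Ioo 0 L ∈ 𝓝 x₀ := (isOpen_Ioo.union isOpen_Ioo).mem_nhds hx₀
  have hwt_nonneg : 0 ≤ wt := by
    have hIcc : Icc 0 T ∈ 𝓝[≤] t₀ :=
      mem_of_superset (Icc_mem_nhdsLE ht₀.1) (Icc_subset_Icc_right ht₀.2)
    have hmax : IsLocalMaxOn (w x₀) (Iic t₀) t₀ :=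
      htime.localize.filter_mono (nhdsWithin_le_of_mem hIcc)
    exact hmax.hasDerivWithinAt_Iic_nonneg hwt.hasDerivWithinAt
  have hwxx : deriv (deriv (w · t₀)) x₀ ≤ 0 := by
    have hx₀0 : x₀ ≠ 0 := by rcases hx₀ with h | h <;> [exact h.2.ne; exact h.1.ne']
    have hx₀L : x₀ ∈ Ioo (-L) L := by
      rcases hx₀ with h | h <;> exact ⟨by linarith [h.1, h.2], by linarith [h.1, h.2]⟩
    obtain ⟨c, hc⟩ := exists_abs_eventuallyEq_const_mul hx₀0
    have hIcc : Icc (-L) L ∈ 𝓝 x₀ := Icc_mem_nhds hx₀L.1 hx₀L.2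
    refine IsLocalMax.deriv_deriv_nonpos_of_add_mul (c := ε * c) ?_ ?_
    · refine (hspace.isLocalMax hIcc).congr ?_
      filter_upwards [hc] with x hx
      simp [hx, mul_assoc]
    · filter_upwards [hbulk] with x hx using hw.differentiableAt x hx t₀ ht₀
  have : w x₀ t₀ / τ ≤ 0 := by linarith [mul_nonpos_of_nonneg_of_nonpos hD hwxx]
  simpa using (div_le_iff₀ hτ).mp this

theorem nonpos_of_isMaxOn_interface (hw : IsInterfaceSubsolution D τ L T w) (hL : 0 < L)
    {ε t₀ : ℝ} (hε : 0 < ε) (ht₀ : t₀ ∈ Ioc 0 T)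
    (hspace : IsMaxOn (fun x => w x t₀ + ε * |x|) (Icc (-L) L) 0) : w 0 t₀ ≤ 0 := by
  by_contra! hpos
  obtain ⟨dplus, dminus, hplus, hminus, hjump⟩ := hw.interface t₀ ht₀ hpos
  have hcont : ContinuousOn (w · t₀) (Icc (-L) L) := hw.continuousOn_slice ⟨ht₀.1.le, ht₀.2⟩
  have hmax : IsLocalMax (fun x => w x t₀ + ε * |x - 0|) 0 := by
    simpa using hspace.isLocalMax (Icc_mem_nhds (by linarith) hL)
  have hright : dplus + ε ≤ 0 := by
    refine (hmax.on (Ici 0)).hasDerivWithinAt_Ici_add_abs_nonpos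
      (hasDerivWithinAt_Ici_of_tendsto_deriv (s := Ioo 0 L) ?_ ?_ (Ioo_mem_nhdsGT hL) hplus)
    · exact fun x hx => (hw.differentiableAt x (Or.inr hx) t₀ ht₀).differentiableWithinAt
    · exact (hcont.continuousWithinAt ⟨by linarith, hL.le⟩).mono
        (Ioo_subset_Icc_self.trans (Icc_subset_Icc_left (by linarith)))
  have hleft : 0 ≤ dminus - ε := by
    refine (hmax.on (Iic 0)).hasDerivWithinAt_Iic_add_abs_nonneg
      (hasDerivWithinAt_Iic_of_tendsto_deriv (s := Ioo (-L) 0) ?_ ?_ (Ioo_mem_nhdsLT (by linarith))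
        hminus)
    · exact fun x hx => (hw.differentiableAt x (Or.inl hx) t₀ ht₀).differentiableWithinAt
    · exact (hcont.continuousWithinAt ⟨by linarith, hL.le⟩).mono
        (Ioo_subset_Icc_self.trans (Icc_subset_Icc_right hL.le))
  linarith

theorem add_abs_le (hw : IsInterfaceSubsolution D τ L T w) (hD : 0 ≤ D) (hτ : 0 < τ)
    (hinit : ∀ x ∈ Icc (-L) L, w x 0 ≤ 0) (hbdry : ∀ t ∈ Icc 0 T, w (-L) t ≤ 0 ∧ w L t ≤ 0)
    {ε x t : ℝ} (hε : 0 < ε) (hx : x ∈ Icc (-L) L) (ht : t ∈ Icc 0 T) :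
    w x t + ε * |x| ≤ ε * L := by
  have hcont : ContinuousOn (fun p : ℝ × ℝ => w p.1 p.2 + ε * |p.1|) (Icc (-L) L ×ˢ Icc 0 T) :=
    hw.continuousOn.add (Continuous.continuousOn (by fun_prop))
  obtain ⟨⟨x₀, t₀⟩, ⟨hx₀, ht₀⟩, hmax⟩ :=
    (isCompact_Icc.prod isCompact_Icc).exists_isMaxOn ⟨(x, t), hx, ht⟩ hcont
  have hspace : IsMaxOn (fun y => w y t₀ + ε * |y|) (Icc (-L) L) x₀ :=
    fun y hy => hmax (show (y, t₀) ∈ Icc (-L) L ×ˢ Icc 0 T from ⟨hy, ht₀⟩)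
  have htime : IsMaxOn (w x₀) (Icc 0 T) t₀ := fun s hs => by
    simpa using hmax (show (x₀, s) ∈ Icc (-L) L ×ˢ Icc 0 T from ⟨hx₀, hs⟩)
  have habs : |x₀| ≤ L := abs_le.2 hx₀
  refine le_trans (hmax (show (x, t) ∈ Icc (-L) L ×ˢ Icc 0 T from ⟨hx, ht⟩)) ?_
  suffices w x₀ t₀ ≤ 0 by
    dsimp only
    linarith [mul_le_mul_of_nonneg_left habs hε.le]
  rcases ht₀.1.eq_or_lt with rfl | ht₀pos
  · exact hinit x₀ hx₀
  rcases habs.eq_or_lt with habsL | habsL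
  · rcases (abs_eq (by linarith [abs_nonneg x₀])).mp habsL with rfl | rfl
    exacts [(hbdry t₀ ht₀).2, (hbdry t₀ ht₀).1]
  rcases eq_or_ne x₀ 0 with rfl | hx₀0
  · exact hw.nonpos_of_isMaxOn_interface (by simpa using habsL) hε ⟨ht₀pos, ht₀.2⟩ hspace
  · have hbulk : x₀ ∈ Ioo (-L) 0 ∪ Ioo 0 L := by
      rcases hx₀0.lt_or_gt with h | h
      exacts [Or.inl ⟨(abs_lt.mp habsL).1, h⟩, Or.inr ⟨h, (abs_lt.mp habsL).2⟩]
    exact hw.nonpos_of_isMaxOn_bulk hD hτ hbulk ⟨ht₀pos, ht₀.2⟩ hspace htime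

theorem nonpos (hw : IsInterfaceSubsolution D τ L T w) (hD : 0 ≤ D) (hτ : 0 < τ)
    (hinit : ∀ x ∈ Icc (-L) L, w x 0 ≤ 0) (hbdry : ∀ t ∈ Icc 0 T, w (-L) t ≤ 0 ∧ w L t ≤ 0) :
    ∀ x ∈ Icc (-L) L, ∀ t ∈ Icc 0 T, w x t ≤ 0 := by
  intro x hx t ht
  have hlim : Tendsto (fun ε => ε * L) (𝓝[>] 0) (𝓝 0) := by
    simpa using ((continuous_mul_const L).tendsto 0).mono_left nhdsWithin_le_nhds
  refine ge_of_tendsto hlim ?_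
  filter_upwards [self_mem_nhdsWithin] with ε (hε : 0 < ε)
  linarith [hw.add_abs_le hD hτ hinit hbdry hε hx ht, mul_nonneg hε.le (abs_nonneg x)]

end IsInterfaceSubsolution

noncomputable def saturationProfile (Q τ t : ℝ) : ℝ := Q * τ * (1 - exp (-(t / τ)))

section SaturationProfile

variable {Q τ : ℝ}

theorem saturationProfile_zero : saturationProfile Q τ 0 = 0 := by
  simp [saturationProfile]

theorem continuous_saturationProfile : Continuous (saturationProfile Q τ) := by
  unfold saturationProfile
  fun_prop

theorem hasDerivAt_saturationProfile (hτ : τ ≠ 0) (t : ℝ) :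
    HasDerivAt (saturationProfile Q τ) (Q - saturationProfile Q τ t / τ) t := by
  refine ((((hasDerivAt_id' t).div_const τ).neg.exp.const_sub 1).const_mul (Q * τ)).congr_deriv ?_
  simp only [saturationProfile, Pi.neg_apply]
  field_simp
  ring

theorem saturationProfile_nonneg (hQ : 0 ≤ Q) (hτ : 0 ≤ τ) {t : ℝ} (ht : 0 ≤ t) :
    0 ≤ saturationProfile Q τ t :=
  mul_nonneg (mul_nonneg hQ hτ) (sub_nonneg.2 (exp_le_one_iff.2 (neg_nonpos.2 (by positivity))))

theorem saturationProfile_le (hQ : 0 ≤ Q) (hτ : 0 ≤ τ) (t : ℝ) :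
    saturationProfile Q τ t ≤ Q * τ :=
  mul_le_of_le_one_right (mul_nonneg hQ hτ) (sub_le_self _ (exp_pos _).le)

end SaturationProfile

structure IsExcitonSolution (L D τ Q κ T : ℝ) (e : ℝ → ℝ → ℝ) : Prop where
  continuousOn : ContinuousOn (fun p : ℝ × ℝ => e p.1 p.2) (Icc (-L) L ×ˢ Icc 0 T)
  boundary : ∀ t ∈ Icc (0:ℝ) T, e (-L) t = 0 ∧ e L t = 0
  initial : ∀ x ∈ Icc (-L) L, e x 0 = 0
  pde : ∀ x ∈ Ioo (-L) 0 ∪ Ioo 0 L, ∀ t ∈ Ioc (0:ℝ) T,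
    DifferentiableAt ℝ (fun y => e y t) x ∧
    DifferentiableAt ℝ (deriv (fun y => e y t)) x ∧
    HasDerivAt (fun s => e x s) (D * deriv (deriv (fun y => e y t)) x + Q - e x t / τ) t
  jump : ∀ t ∈ Ioc (0:ℝ) T, ∃ dplus dminus : ℝ,
    Tendsto (deriv (fun y => e y t)) (𝓝[>] 0) (𝓝 dplus) ∧
    Tendsto (deriv (fun y => e y t)) (𝓝[<] 0) (𝓝 dminus) ∧
    (-D * dplus) - (-D * dminus) = -κ * e 0 t

namespace IsExcitonSolution

variable {L D τ Q κ T : ℝ} {e : ℝ → ℝ → ℝ}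

theorem isInterfaceSubsolution (he : IsExcitonSolution L D τ Q κ T e) (hD : 0 < D)
    (hτ : 0 < τ) (hQ : 0 ≤ Q) (hκ : 0 ≤ κ) {σ c : ℝ} (hc : 0 ≤ c) (hσc : σ ≤ c) :
    IsInterfaceSubsolution D τ L T fun x t => σ * e x t - c * saturationProfile Q τ t where
  continuousOn :=
    (continuousOn_const.mul he.continuousOn).sub
      (continuous_const.mul (continuous_saturationProfile.comp continuous_snd)).continuousOn
  differentiableAt x hx t ht := ((he.pde x hx t ht).1.const_mul σ).sub_const _
  hasDerivAt_le x hx t ht := by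
    refine ⟨_, ((he.pde x hx t ht).2.2.const_mul σ).sub
      ((hasDerivAt_saturationProfile hτ.ne' t).const_mul c), ?_⟩
    rw [deriv_const_mul_sub_const, deriv_const_mul_field]
    linear_combination mul_nonpos_of_nonpos_of_nonneg (sub_nonpos.2 hσc) hQ
  interface t ht hpos := by
    obtain ⟨dplus, dminus, hplus, hminus, hjump⟩ := he.jump t ht
    refine ⟨σ * dplus, σ * dminus, ?_, ?_, ?_⟩
    · simpa only [deriv_const_mul_sub_const] using hplus.const_mul σ
    · simpa only [deriv_const_mul_sub_const] using hminus.const_mul σ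
    have hσe : 0 ≤ σ * e 0 t := by
      linarith [mul_nonneg hc (saturationProfile_nonneg hQ hτ.le ht.1.le)]
    have hflux : D * (σ * dplus - σ * dminus) = κ * (σ * e 0 t) := by
      linear_combination (-σ) * hjump
    linarith [nonneg_of_mul_nonneg_right (hflux ▸ mul_nonneg hκ hσe) hD]

theorem mul_le_mul_saturationProfile (he : IsExcitonSolution L D τ Q κ T e) (hD : 0 < D)
    (hτ : 0 < τ) (hQ : 0 ≤ Q) (hκ : 0 ≤ κ) {σ c : ℝ} (hc : 0 ≤ c) (hσc : σ ≤ c) :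
    ∀ x ∈ Icc (-L) L, ∀ t ∈ Icc 0 T, σ * e x t ≤ c * saturationProfile Q τ t := by
  intro x hx t ht
  have hinit (x : ℝ) (hx : x ∈ Icc (-L) L) : σ * e x 0 - c * saturationProfile Q τ 0 ≤ 0 := by
    simp [he.initial x hx, saturationProfile_zero]
  have hbdry (t : ℝ) (ht : t ∈ Icc 0 T) : σ * e (-L) t - c * saturationProfile Q τ t ≤ 0 ∧
      σ * e L t - c * saturationProfile Q τ t ≤ 0 := by
    have hM := mul_nonneg hc (saturationProfile_nonneg hQ hτ.le ht.1)
    simp only [(he.boundary t ht).1, (he.boundary t ht).2]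
    constructor <;> linarith
  have := (he.isInterfaceSubsolution hD hτ hQ hκ hc hσc).nonpos hD.le hτ hinit hbdry x hx t ht
  linarith

end IsExcitonSolution

theorem parabolic_exciton_maximum_principle_1d_general
    (L D τ Q κ T : ℝ) (hD : 0 < D) (hτ : 0 < τ)
    (hQ : 0 ≤ Q) (hκ : 0 ≤ κ)
    (e : ℝ → ℝ → ℝ)  -- e x t
    -- regularity: continuity on the closed space-time cylinder
    (hcont : ContinuousOn (fun p : ℝ × ℝ => e p.1 p.2)
        (Set.Icc (-L) L ×ˢ Set.Icc 0 T))
    -- boundary conditions at the contacts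
    (hbc : ∀ t ∈ Set.Icc (0:ℝ) T, e (-L) t = 0 ∧ e L t = 0)
    -- zero initial datum
    (hic : ∀ x ∈ Set.Icc (-L) L, e x 0 = 0)
    -- the PDE ∂e/∂t - D ∂²e/∂x² = Q - e/τ in the bulk
    (hpde : ∀ x ∈ Set.Ioo (-L) 0 ∪ Set.Ioo 0 L, ∀ t ∈ Set.Ioc (0:ℝ) T,
        DifferentiableAt ℝ (fun y => e y t) x ∧
        DifferentiableAt ℝ (deriv (fun y => e y t)) x ∧
        HasDerivAt (fun s => e x s)
          (D * deriv (deriv (fun y => e y t)) x + Q - e x t / τ) t)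
    -- interface condition: jump of -D e_x across 0 equals -κ e(0,t)
    (hjump : ∀ t ∈ Set.Ioc (0:ℝ) T, ∃ dplus dminus : ℝ,
        Tendsto (deriv (fun y => e y t)) (nhdsWithin 0 (Set.Ioi 0)) (nhds dplus) ∧
        Tendsto (deriv (fun y => e y t)) (nhdsWithin 0 (Set.Iio 0)) (nhds dminus) ∧
        (-D * dplus) - (-D * dminus) = -κ * e 0 t) :
    ∀ x ∈ Set.Icc (-L) L, ∀ t ∈ Set.Icc (0:ℝ) T,
      0 ≤ e x t ∧ e x t ≤ Q * τ * (1 - Real.exp (-(t / τ))) ∧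
      Q * τ * (1 - Real.exp (-(t / τ))) ≤ Q * τ := by
  have he : IsExcitonSolution L D τ Q κ T e := ⟨hcont, hbc, hic, hpde, hjump⟩
  intro x hx t ht
  have hlower := he.mul_le_mul_saturationProfile hD hτ hQ hκ le_rfl (by norm_num : (-1 : ℝ) ≤ 0)
    x hx t ht
  have hupper := he.mul_le_mul_saturationProfile hD hτ hQ hκ zero_le_one le_rfl x hx t ht
  refine ⟨by linarith, by simpa [saturationProfile] using hupper, saturationProfile_le hQ hτ.le t⟩

theorem parabolic_exciton_maximum_principle_1d
    (L D τ Q κ T : ℝ) (hL : 0 < L) (hD : 0 < D) (hτ : 0 < τ)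
    (hQ : 0 ≤ Q) (hκ : 0 ≤ κ) (hT : 0 < T)
    (e : ℝ → ℝ → ℝ)  -- e x t
    -- regularity: continuity on the closed space-time cylinder
    (hcont : ContinuousOn (fun p : ℝ × ℝ => e p.1 p.2)
        (Set.Icc (-L) L ×ˢ Set.Icc 0 T))
    -- boundary conditions at the contacts
    (hbc : ∀ t ∈ Set.Icc (0:ℝ) T, e (-L) t = 0 ∧ e L t = 0)
    -- zero initial datum
    (hic : ∀ x ∈ Set.Icc (-L) L, e x 0 = 0)
    -- the PDE ∂e/∂t - D ∂²e/∂x² = Q - e/τ in the bulk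
    (hpde : ∀ x ∈ Set.Ioo (-L) 0 ∪ Set.Ioo 0 L, ∀ t ∈ Set.Ioc (0:ℝ) T,
        DifferentiableAt ℝ (fun y => e y t) x ∧
        DifferentiableAt ℝ (deriv (fun y => e y t)) x ∧
        HasDerivAt (fun s => e x s)
          (D * deriv (deriv (fun y => e y t)) x + Q - e x t / τ) t)
    -- interface condition: jump of -D e_x across 0 equals -κ e(0,t)
    (hjump : ∀ t ∈ Set.Ioc (0:ℝ) T, ∃ dplus dminus : ℝ,
        Tendsto (deriv (fun y => e y t)) (nhdsWithin 0 (Set.Ioi 0)) (nhds dplus) ∧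
        Tendsto (deriv (fun y => e y t)) (nhdsWithin 0 (Set.Iio 0)) (nhds dminus) ∧
        (-D * dplus) - (-D * dminus) = -κ * e 0 t) :
    ∀ x ∈ Set.Icc (-L) L, ∀ t ∈ Set.Icc (0:ℝ) T,
      0 ≤ e x t ∧ e x t ≤ Q * τ * (1 - Real.exp (-(t / τ))) ∧
      Q * τ * (1 - Real.exp (-(t / τ))) ≤ Q * τ :=
  parabolic_exciton_maximum_principle_1d_general L D τ Q κ T hD hτ hQ hκ e hcont hbc hic hpde hjump
end

section
/- Monotone dependence of the 1D short-circuit interface dissociation on the slab width: in the steady 1D exciton problem −De'' = Q − e/τ on (−L,0)∪(0,L), e(±L)=0, e continuous at 0, flux jump −κ e(0) with κ = 2H/τ_diss, the interfacial dissociation flux F(H) := κ e_H(0) is increasing in H and bounded above by the total generation limit, i.e., F(H) ≤ 2LQ for all H > 0. -/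
open Real Filter

/-!
On each half-interval the solution is `Qτ + A cosh (x/ℓ) + B sinh (x/ℓ)` with `ℓ = √(Dτ)`.
The quenching conditions, continuity at `0` and the flux jump determine `e(0)`:
`(ℓ sinh (L/ℓ) κ + 2D cosh (L/ℓ)) e(0) = 2DQτ (cosh (L/ℓ) - 1)`.
So the flux `κ e(0)` has the form `κN / (Aκ + B)` with `N ≥ 0` and `A, B > 0`. It is therefore
increasing in `κ` and bounded by `N / A = 2Qℓ (cosh (L/ℓ) - 1) / sinh (L/ℓ)`, which is at most
`2LQ` because `cosh u - 1 ≤ u sinh u`.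
-/

open Set Topology

theorem Real.cosh_sub_one_le_mul_sinh {u : ℝ} (hu : 0 ≤ u) : cosh u - 1 ≤ u * sinh u := by
  rcases hu.eq_or_lt with rfl | hu
  · simp
  obtain ⟨ξ, hξ, hslope⟩ := exists_hasDerivAt_eq_slope cosh sinh hu continuous_cosh.continuousOn
    fun x _ => hasDerivAt_cosh x
  rw [cosh_zero, sub_zero, eq_div_iff hu.ne'] at hslope
  rw [← hslope, mul_comm]
  gcongr
  exact sinh_le_sinh.2 hξ.2.le

theorem exists_eq_cosh_sinh_of_hasDerivAt {e e' : ℝ → ℝ} {a b ℓ m : ℝ} (hℓ : 0 < ℓ)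
    (hode : ∀ x ∈ Ioo a b, HasDerivAt e (e' x) x ∧ HasDerivAt e' ((e x - m) / ℓ ^ 2) x) :
    ∃ g h : ℝ, ∀ x ∈ Ioo a b,
      e x = m + g * cosh ((x - a) / ℓ) + h * sinh ((x - a) / ℓ) ∧
      e' x = (g * sinh ((x - a) / ℓ) + h * cosh ((x - a) / ℓ)) / ℓ := by
  rcases (Ioo a b).eq_empty_or_nonempty with hempty | ⟨x₀, hx₀⟩
  · exact ⟨0, 0, by simp [hempty]⟩
  set t : ℝ → ℝ := fun x => (x - a) / ℓ
  -- the coordinates of `(e - m, ℓ e')` in the hyperbolically rotating frame `(cosh t, sinh t)` are constant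
  set G : ℝ → ℝ := fun x => (e x - m) * cosh (t x) - ℓ * e' x * sinh (t x)
  set F : ℝ → ℝ := fun x => ℓ * e' x * cosh (t x) - (e x - m) * sinh (t x)
  have hderiv : ∀ x ∈ Ioo a b, HasDerivAt G 0 x ∧ HasDerivAt F 0 x := by
    intro x hx
    obtain ⟨he, he'⟩ := hode x hx
    have ht : HasDerivAt t (1 / ℓ) x := by
      simpa using ((hasDerivAt_id x).sub_const a).div_const ℓ
    have hc := ht.cosh
    have hs := ht.sinh
    constructor
    · refine (((he.sub_const m).mul hc).sub ((he'.const_mul ℓ).mul hs)).congr_deriv ?_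
      field_simp
      ring
    · refine (((he'.const_mul ℓ).mul hc).sub ((he.sub_const m).mul hs)).congr_deriv ?_
      field_simp
      ring
  have hconst : ∀ {f : ℝ → ℝ}, (∀ x ∈ Ioo a b, HasDerivAt f 0 x) → ∀ x ∈ Ioo a b, f x = f x₀ :=
    fun hf x hx => isOpen_Ioo.is_const_of_deriv_eq_zero isPreconnected_Ioo
      (fun y hy => (hf y hy).differentiableAt.differentiableWithinAt)
      (fun y hy => (hf y hy).deriv) hx hx₀
  refine ⟨G x₀, F x₀, fun x hx => ?_⟩
  have hG := hconst (fun y hy => (hderiv y hy).1) x hx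
  have hF := hconst (fun y hy => (hderiv y hy).2) x hx
  have hcs := cosh_sq (t x)
  constructor
  · linear_combination cosh (t x) * hG + sinh (t x) * hF - (e x - m) * hcs
  · rw [eq_div_iff hℓ.ne']
    linear_combination sinh (t x) * hG + cosh (t x) * hF - ℓ * e' x * hcs

theorem exists_boundary_values_of_hasDerivAt {e e' : ℝ → ℝ} {a b ℓ m : ℝ} (hℓ : 0 < ℓ)
    (hab : a < b) (hcont : ContinuousOn e (Icc a b))
    (hode : ∀ x ∈ Ioo a b, HasDerivAt e (e' x) x ∧ HasDerivAt e' ((e x - m) / ℓ ^ 2) x) :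
    ∃ g h : ℝ, e a = m + g ∧
      e b = m + g * cosh ((b - a) / ℓ) + h * sinh ((b - a) / ℓ) ∧
      Tendsto e' (𝓝[Ioo a b] a) (𝓝 (h / ℓ)) ∧
      Tendsto e' (𝓝[Ioo a b] b) (𝓝 ((g * sinh ((b - a) / ℓ) + h * cosh ((b - a) / ℓ)) / ℓ)) := by
  obtain ⟨g, h, hsol⟩ := exists_eq_cosh_sinh_of_hasDerivAt hℓ hode
  set E : ℝ → ℝ := fun x => m + g * cosh ((x - a) / ℓ) + h * sinh ((x - a) / ℓ)
  set E' : ℝ → ℝ := fun x => (g * sinh ((x - a) / ℓ) + h * cosh ((x - a) / ℓ)) / ℓ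
  have hE : EqOn e E (Icc a b) :=
    EqOn.of_subset_closure (fun x hx => (hsol x hx).1) hcont (by fun_prop) Ioo_subset_Icc_self
      (closure_Ioo hab.ne).ge
  have hE' (x : ℝ) : Tendsto e' (𝓝[Ioo a b] x) (𝓝 (E' x)) :=
    ((by fun_prop : Continuous E').tendsto x).mono_left nhdsWithin_le_nhds |>.congr'
      (eventuallyEq_nhdsWithin_of_eqOn fun y hy => (hsol y hy).2).symm
  refine ⟨g, h, ?_, ?_, ?_, ?_⟩
  · simpa [E] using hE (left_mem_Icc.2 hab.le)
  · exact hE (right_mem_Icc.2 hab.le)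
  · simpa [E'] using hE' a
  · exact hE' b

theorem IsSteadyExcitonSol.interface_balance {L D τ Q κ : ℝ} {e : ℝ → ℝ}
    (hsol : IsSteadyExcitonSol L D τ Q κ e) (hL : 0 < L) (hD : 0 < D) (hτ : 0 < τ) :
    (√(D * τ) * sinh (L / √(D * τ)) * κ + 2 * D * cosh (L / √(D * τ))) * e 0 =
      2 * D * (Q * τ) * (cosh (L / √(D * τ)) - 1) := by
  obtain ⟨hcont, hleft, hright, hode, dplus, dminus, hdplus, hdminus, hjump⟩ := hsol
  set ℓ := √(D * τ)
  have hℓ : 0 < ℓ := by positivity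
  have hℓsq : ℓ ^ 2 = D * τ := sq_sqrt (by positivity)
  have hode' : ∀ x ∈ Ioo (-L) 0 ∪ Ioo 0 L,
      HasDerivAt e (deriv e x) x ∧ HasDerivAt (deriv e) ((e x - Q * τ) / ℓ ^ 2) x := by
    intro x hx
    obtain ⟨hd, hd', heq⟩ := hode x hx
    refine ⟨hd.hasDerivAt, hd'.hasDerivAt.congr_deriv ?_⟩
    rw [hℓsq, eq_div_iff (by positivity)]
    field_simp at heq
    linear_combination -heq
  obtain ⟨A₁, B₁, hl, hl0, -, hdl0⟩ := exists_boundary_values_of_hasDerivAt hℓ (neg_neg_iff_pos.2 hL)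
    (hcont.mono (Icc_subset_Icc_right hL.le)) fun x hx => hode' x (Or.inl hx)
  obtain ⟨A₂, B₂, hr0, hr, hdr0, -⟩ := exists_boundary_values_of_hasDerivAt hℓ hL
    (hcont.mono (Icc_subset_Icc_left (neg_nonpos.2 hL.le))) fun x hx => hode' x (Or.inr hx)
  have hdplus' : dplus * ℓ = B₂ := by
    have := left_nhdsWithin_Ioo_neBot hL
    rw [tendsto_nhds_unique (hdplus.mono_left (nhdsWithin_mono _ Ioo_subset_Ioi_self)) hdr0]
    field_simp
  have hdminus' : dminus * ℓ = A₁ * sinh (L / ℓ) + B₁ * cosh (L / ℓ) := by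
    have := right_nhdsWithin_Ioo_neBot (neg_neg_iff_pos.2 hL)
    rw [tendsto_nhds_unique (hdminus.mono_left (nhdsWithin_mono _ Ioo_subset_Iio_self)) hdl0]
    field_simp
    ring_nf
  rw [hleft] at hl
  rw [zero_sub, neg_neg] at hl0
  rw [sub_zero, hright] at hr
  set c := cosh (L / ℓ)
  set s := sinh (L / ℓ)
  -- eliminate the coefficients `A₁, B₁, A₂, B₂` from the six boundary relations
  linear_combination (ℓ * s) * hjump + (-(D * s)) * hdminus' + (D * s) * hdplus' + (D * c) * hl0 +
    (-D) * hr + (D * c) * hr0 + (D * (s ^ 2 - c ^ 2)) * hl + (-(D * (Q * τ))) * cosh_sq (L / ℓ)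

theorem monotoneOn_mul_div_mul_add {N A B : ℝ} (hN : 0 ≤ N) (hA : 0 ≤ A) (hB : 0 < B) :
    MonotoneOn (fun κ => κ * N / (A * κ + B)) (Ici 0) := by
  intro κ₁ hκ₁ κ₂ hκ₂ hle
  simp only [mem_Ici] at hκ₁ hκ₂
  rw [div_le_div_iff₀ (by positivity) (by positivity)]
  nlinarith [mul_nonneg (mul_nonneg hN hB.le) (sub_nonneg.2 hle)]

theorem mul_div_mul_add_le_div {N A B κ : ℝ} (hN : 0 ≤ N) (hA : 0 < A) (hB : 0 ≤ B)
    (hκ : 0 ≤ κ) : κ * N / (A * κ + B) ≤ N / A := by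
  rcases (add_nonneg (mul_nonneg hA.le hκ) hB).eq_or_lt with hzero | hpos
  · rw [← hzero, div_zero]
    positivity
  rw [div_le_div_iff₀ hpos hA]
  nlinarith [mul_nonneg hN hB]

noncomputable def interfaceFlux (L D τ Q κ : ℝ) : ℝ :=
  κ * (2 * D * (Q * τ) * (cosh (L / √(D * τ)) - 1)) /
    (√(D * τ) * sinh (L / √(D * τ)) * κ + 2 * D * cosh (L / √(D * τ)))

theorem IsSteadyExcitonSol.mul_apply_zero_eq_interfaceFlux {L D τ Q κ : ℝ} {e : ℝ → ℝ}
    (hsol : IsSteadyExcitonSol L D τ Q κ e) (hL : 0 < L) (hD : 0 < D) (hτ : 0 < τ)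
    (hκ : 0 ≤ κ) : κ * e 0 = interfaceFlux L D τ Q κ := by
  have hpos : 0 < √(D * τ) * sinh (L / √(D * τ)) * κ + 2 * D * cosh (L / √(D * τ)) := by
    have := sinh_pos_iff.2 (show 0 < L / √(D * τ) by positivity)
    positivity
  rw [interfaceFlux, eq_div_iff hpos.ne', ← hsol.interface_balance hL hD hτ]
  ring

section interfaceFlux

variable {L D τ Q : ℝ} (hL : 0 < L) (hD : 0 < D) (hτ : 0 < τ) (hQ : 0 ≤ Q)
include hL hD hτ hQ

theorem interfaceFlux_monotoneOn : MonotoneOn (interfaceFlux L D τ Q) (Ici 0) := by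
  have := sinh_pos_iff.2 (show 0 < L / √(D * τ) by positivity)
  have := sub_nonneg.2 (one_le_cosh (L / √(D * τ)))
  exact monotoneOn_mul_div_mul_add (N := 2 * D * (Q * τ) * (cosh (L / √(D * τ)) - 1))
    (A := √(D * τ) * sinh (L / √(D * τ))) (B := 2 * D * cosh (L / √(D * τ)))
    (by positivity) (by positivity) (by positivity)

theorem interfaceFlux_le {κ : ℝ} (hκ : 0 ≤ κ) : interfaceFlux L D τ Q κ ≤ 2 * L * Q := by
  set ℓ := √(D * τ)
  have hℓ : 0 < ℓ := by positivity
  have hℓsq : ℓ ^ 2 = D * τ := sq_sqrt (by positivity)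
  have hs := sinh_pos_iff.2 (show 0 < L / ℓ by positivity)
  have hc := sub_nonneg.2 (one_le_cosh (L / ℓ))
  calc interfaceFlux L D τ Q κ
      ≤ 2 * D * (Q * τ) * (cosh (L / ℓ) - 1) / (ℓ * sinh (L / ℓ)) :=
        mul_div_mul_add_le_div (by positivity) (by positivity) (by positivity) hκ
    _ = 2 * Q * (ℓ * (cosh (L / ℓ) - 1)) / sinh (L / ℓ) := by
        rw [div_eq_div_iff (by positivity) hs.ne']
        linear_combination (-2 * Q * (cosh (L / ℓ) - 1) * sinh (L / ℓ)) * hℓsq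
    _ ≤ 2 * Q * (ℓ * (L / ℓ * sinh (L / ℓ))) / sinh (L / ℓ) := by
        gcongr
        exact cosh_sub_one_le_mul_sinh (by positivity)
    _ = 2 * L * Q := by
        field_simp

end interfaceFlux

theorem interface_dissociation_flux_monotone_and_bounded
    (L D τ Q τdiss : ℝ) (hL : 0 < L) (hD : 0 < D) (hτ : 0 < τ)
    (hQ : 0 < Q) (hτd : 0 < τdiss) :
    -- F(H) = (2H/τ_diss) e_H(0) is increasing in H
    (∀ H₁ H₂ : ℝ, 0 < H₁ → H₁ ≤ H₂ →
      ∀ e₁ e₂ : ℝ → ℝ,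
        IsSteadyExcitonSol L D τ Q (2 * H₁ / τdiss) e₁ →
        IsSteadyExcitonSol L D τ Q (2 * H₂ / τdiss) e₂ →
        (2 * H₁ / τdiss) * e₁ 0 ≤ (2 * H₂ / τdiss) * e₂ 0) ∧
    -- and bounded above by the total generation 2LQ
    (∀ H : ℝ, 0 < H → ∀ e : ℝ → ℝ,
        IsSteadyExcitonSol L D τ Q (2 * H / τdiss) e →
        (2 * H / τdiss) * e 0 ≤ 2 * L * Q) := by
  refine ⟨fun H₁ H₂ hH₁ hle e₁ e₂ hsol₁ hsol₂ => ?_, fun H hH e hsol => ?_⟩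
  · have hκ₁ : 0 ≤ 2 * H₁ / τdiss := by positivity
    have hκle : 2 * H₁ / τdiss ≤ 2 * H₂ / τdiss := by gcongr
    have hκ₂ := hκ₁.trans hκle
    rw [hsol₁.mul_apply_zero_eq_interfaceFlux hL hD hτ hκ₁,
      hsol₂.mul_apply_zero_eq_interfaceFlux hL hD hτ hκ₂]
    exact interfaceFlux_monotoneOn hL hD hτ hQ.le hκ₁ hκ₂ hκle
  · have hκ : 0 ≤ 2 * H / τdiss := by positivity
    rw [hsol.mul_apply_zero_eq_interfaceFlux hL hD hτ hκ]
    exact interfaceFlux_le hL hD hτ hQ.le hκ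
end
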